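/- Given finite-dimensional vector spaces $D_0, D_1$ with linear maps $u : D_1 \to D_0$ and $v : D_0 \to D_1$ such that $m = v u + \mathrm{id}_{D_1}$ is an isomorphism, the diagram with $E_0 = D_0 \oplus D_1$, $E_\pm = D_1$, $f_- = (u, \mathrm{id})$, $g_- = \mathrm{pr}_2$, $f_+ = (0, \mathrm{id})$, $g_+ = (v, \mathrm{id})$ (i.e. $g_+(d_0, d_1) = v(d_0) + d_1$) satisfies: $g_\pm f_\pm = \mathrm{id}$ and both $g_+ f_-$ and $g_- f_+$ are isomorphisms. -/
import Mathlib

theorem stmt1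
    (D0 D1 : Type) [AddCommGroup D0] [Module ℂ D0] [FiniteDimensional ℂ D0]
    [AddCommGroup D1] [Module ℂ D1] [FiniteDimensional ℂ D1]
    (u : D1 →ₗ[ℂ] D0) (v : D0 →ₗ[ℂ] D1)
    (hm : Function.Bijective (v ∘ₗ u + LinearMap.id : D1 →ₗ[ℂ] D1))
    (fm : D1 →ₗ[ℂ] D0 × D1) (gm : D0 × D1 →ₗ[ℂ] D1)
    (fp : D1 →ₗ[ℂ] D0 × D1) (gp : D0 × D1 →ₗ[ℂ] D1)
    (hfm : fm = LinearMap.prod u LinearMap.id)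
    (hgm : gm = LinearMap.snd ℂ D0 D1)
    (hfp : fp = LinearMap.prod 0 LinearMap.id)
    (hgp : gp = v ∘ₗ LinearMap.fst ℂ D0 D1 + LinearMap.snd ℂ D0 D1) :
    gm ∘ₗ fm = LinearMap.id ∧ gp ∘ₗ fp = LinearMap.id ∧
      Function.Bijective (gp ∘ₗ fm) ∧ Function.Bijective (gm ∘ₗ fp) := by
  subst hfm hgm hfp hgp
  refine ⟨by ext x <;> simp, by ext x <;> simp, ?_, ?_⟩
  · have : ((v ∘ₗ LinearMap.fst ℂ D0 D1 + LinearMap.snd ℂ D0 D1) ∘ₗ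
        LinearMap.prod u LinearMap.id) = v ∘ₗ u + LinearMap.id := by
      ext x <;> simp
    rw [this]; exact hm
  · have : ((LinearMap.snd ℂ D0 D1) ∘ₗ LinearMap.prod 0 LinearMap.id :
        D1 →ₗ[ℂ] D1) = LinearMap.id := by ext x <;> simp
    rw [this]; exact Function.bijective_id
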